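/- Let 0 < r < ρ and K > 0, and let η ∈ C^∞(ℝ³) satisfy 0 ≤ η ≤ 1, supp η ⊂ B(ρ), η ≡ 1 on B((r+3ρ)/4), |∇η| ≤ K(ρ−r)^{−1} and |∇²η| ≤ K(ρ−r)^{−2}. Let Γ(y) = 1/(4π|y|) and, for a function u with u(·,t) ∈ L²(B(ρ);ℝ³) for a.e. t ∈ (−ρ²,0), define Π₂(x,t) = ∫_{ℝ³} [ 2 ∂_iΓ(x−y) ∂_jη(y) u_j(y,t)u_i(y,t) − Γ(x−y) ∂_i∂_jη(y) u_j(y,t)u_i(y,t) ] dy (summation over i,j = 1,2,3; all terms vanish off B(ρ)∖B((r+3ρ)/4)). Then there is a constant C depending only on K such that |Π₂(x,t)| ≤ C (ρ−r)^{−3} ∫_{B(ρ)} |u(y,t)|² dy for every x ∈ B((r+ρ)/2) and a.e. t, and consequently ‖Π₂‖_{L^{3/2}(Q((r+ρ)/2))} ≤ C ρ³ (ρ−r)^{−3} ‖u‖²_{L³(Q(ρ))}. -/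

import Mathlib

open MeasureTheory Real Set
open scoped ENNReal Topology

noncomputable section

/-- Three-dimensional Euclidean space. -/
abbrev E3 := EuclideanSpace ℝ (Fin 3)

/-- Spatial partial derivative in the `i`-th coordinate direction. -/
def pd (i : Fin 3) (f : E3 → ℝ) (x : E3) : ℝ :=
  fderiv ℝ f x (EuclideanSpace.single i 1)

/-- Spatial Laplacian. -/
def lap (f : E3 → ℝ) (x : E3) : ℝ := ∑ i : Fin 3, pd i (pd i f) x

/-- Time interval `(-τ², 0)` of the parabolic cylinder `Q(τ)`. -/
def TI (τ : ℝ) : Set ℝ := Set.Ioo (-(τ ^ 2)) 0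

/-- Mixed space-time norm `‖ t ↦ ‖f(t,·)‖_{L^p(B(a))} ‖_{L^q((-τ²,0))}`, where `B(a)` is the
ball of radius `a` centred at the origin of `ℝ³`. -/
def mixedNorm (p q : ℝ≥0∞) (a τ : ℝ) (f : ℝ → E3 → ℝ) : ℝ≥0∞ :=
  if q = ∞ then
    essSup (fun t => eLpNorm (f t) p (volume.restrict (Metric.ball (0 : E3) a)))
      (volume.restrict (TI τ))
  else
    (∫⁻ t in TI τ, (eLpNorm (f t) p (volume.restrict (Metric.ball (0 : E3) a))) ^ q.toReal) ^
      (1 / q.toReal)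

/-- `du` is the weak spatial gradient of the vector field `u` on `B(a) × (-τ²,0)`:
`du t x i j` represents `∂ᵢ uⱼ (x,t)`. -/
def IsWeakGrad (a τ : ℝ) (u : ℝ → E3 → E3) (du : ℝ → E3 → Fin 3 → Fin 3 → ℝ) : Prop :=
  ∀ᵐ t ∂(volume.restrict (TI τ)), ∀ ψ : E3 → ℝ, ContDiff ℝ (⊤ : ℕ∞) ψ → HasCompactSupport ψ →
    tsupport ψ ⊆ Metric.ball (0 : E3) a →
    ∀ i j : Fin 3, ∫ x in Metric.ball (0 : E3) a, u t x j * pd i ψ x =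
      - ∫ x in Metric.ball (0 : E3) a, du t x i j * ψ x

/-- Pointwise squared magnitude `|∇u|²` computed from the gradient data. -/
def gradSq (du : ℝ → E3 → Fin 3 → Fin 3 → ℝ) (t : ℝ) (x : E3) : ℝ :=
  ∑ i : Fin 3, ∑ j : Fin 3, (du t x i j) ^ 2

/-- `‖∇u‖²_{L²(B(a)×(-τ²,0))}` computed from the gradient data. -/
def gradL2sq (a τ : ℝ) (du : ℝ → E3 → Fin 3 → Fin 3 → ℝ) : ℝ≥0∞ :=
  ∫⁻ t in TI τ, ∫⁻ x in Metric.ball (0 : E3) a, ENNReal.ofReal (gradSq du t x)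

/-- A test function on the parabolic cylinder `B(a) × (-τ², 0)`:
smooth, compactly supported, with support inside the open cylinder. -/
structure IsTest (a τ : ℝ) (φ : ℝ → E3 → ℝ) : Prop where
  smooth : ContDiff ℝ (⊤ : ℕ∞) (Function.uncurry φ)
  compactSupp : HasCompactSupport (Function.uncurry φ)
  supp : tsupport (Function.uncurry φ) ⊆ (TI τ) ×ˢ (Metric.ball (0 : E3) a)



/-- The fundamental solution `Γ(y) = 1/(4π|y|)` of `−Δ` on `ℝ³`. -/
def Gam (y : E3) : ℝ := 1 / (4 * Real.pi * ‖y‖)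

/-- `∂ᵢΓ(y) = −yᵢ/(4π|y|³)`. -/
def dGam (i : Fin 3) (y : E3) : ℝ := -(y i) / (4 * Real.pi * ‖y‖ ^ 3)

lemma abs_coord_le (y : E3) (i : Fin 3) : |y i| ≤ ‖y‖ := by
  rw [EuclideanSpace.norm_eq]
  rw [← Real.sqrt_sq_eq_abs]
  apply Real.sqrt_le_sqrt
  have h := Finset.single_le_sum (f := fun j : Fin 3 => ‖y j‖ ^ 2) (fun j _ => by positivity)
      (Finset.mem_univ i)
  simpa [Real.norm_eq_abs, sq_abs] using h

lemma abs_Gam_le {z : E3} {δ : ℝ} (hδ : 0 < δ) (h : δ ≤ ‖z‖) : |Gam z| ≤ 1 / δ := by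
  have hz : 0 < ‖z‖ := lt_of_lt_of_le hδ h
  have hπ : (3:ℝ) < Real.pi := Real.pi_gt_three
  have hpos : 0 < 4 * Real.pi * ‖z‖ := by positivity
  rw [Gam, abs_div, abs_one, abs_of_pos hpos, div_le_div_iff₀ hpos hδ]
  nlinarith

lemma abs_dGam_le (i : Fin 3) {z : E3} {δ : ℝ} (hδ : 0 < δ) (h : δ ≤ ‖z‖) :
    |dGam i z| ≤ 1 / δ ^ 2 := by
  have hz : 0 < ‖z‖ := lt_of_lt_of_le hδ h
  have hπ : (3:ℝ) < Real.pi := Real.pi_gt_three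
  have hpos : 0 < 4 * Real.pi * ‖z‖ ^ 3 := by positivity
  have h1 : |dGam i z| = |z i| / (4 * Real.pi * ‖z‖ ^ 3) := by
    rw [dGam, abs_div, abs_neg, abs_of_pos hpos]
  rw [h1]
  have h2 : |z i| / (4 * Real.pi * ‖z‖ ^ 3) ≤ ‖z‖ / (4 * Real.pi * ‖z‖ ^ 3) := by
    gcongr; exact abs_coord_le z i
  refine h2.trans ?_
  rw [div_le_div_iff₀ hpos (by positivity)]
  nlinarith [mul_le_mul_of_nonneg_right (mul_self_le_mul_self hδ.le h) hz.le]

lemma pd_eq_zero_of_const_on {f : E3 → ℝ} {c : ℝ} {U : Set E3} (hU : IsOpen U)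
    (hf : ∀ y ∈ U, f y = c) {x : E3} (hx : x ∈ U) (i : Fin 3) : pd i f x = 0 := by
  have hev : f =ᶠ[𝓝 x] (fun _ => c) := Filter.eventuallyEq_of_mem (hU.mem_nhds hx) hf
  have : fderiv ℝ f x = fderiv ℝ (fun _ => c) x := hev.fderiv_eq
  simp [pd, this]

lemma abs_pd_le (i : Fin 3) (f : E3 → ℝ) (x : E3) : |pd i f x| ≤ ‖fderiv ℝ f x‖ := by
  have h := (fderiv ℝ f x).le_opNorm (EuclideanSpace.single i (1:ℝ))
  simpa [pd, Real.norm_eq_abs, EuclideanSpace.norm_single] using h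

lemma abs_pd_pd_le {η : E3 → ℝ} (hη : ContDiff ℝ (⊤ : ℕ∞) η) (i j : Fin 3) (x : E3) :
    |pd i (pd j η) x| ≤ ‖iteratedFDeriv ℝ 2 η x‖ := by
  have hdiff : DifferentiableAt ℝ (fderiv ℝ η) x :=
    (hη.fderiv_right (m := (⊤ : ℕ∞)) le_rfl).differentiable (by simp) |>.differentiableAt
  have hkey : pd i (pd j η) x
      = iteratedFDeriv ℝ 2 η x ![EuclideanSpace.single i 1, EuclideanSpace.single j 1] := by
    rw [iteratedFDeriv_two_apply]
    show fderiv ℝ (fun y => fderiv ℝ η y (EuclideanSpace.single j 1)) x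
        (EuclideanSpace.single i 1) = _
    rw [fderiv_clm_apply hdiff (differentiableAt_const _)]
    simp
  rw [hkey]
  have h := (iteratedFDeriv ℝ 2 η x).le_opNorm
    ![EuclideanSpace.single i 1, EuclideanSpace.single j 1]
  have h2 : ∏ k : Fin 2,
      ‖(![EuclideanSpace.single i 1, EuclideanSpace.single j 1] : Fin 2 → E3) k‖ = 1 := by
    simp [Fin.prod_univ_two, EuclideanSpace.norm_single]
  rw [h2, mul_one] at h
  simpa [Real.norm_eq_abs] using h

lemma normsq_eq (y : E3) : ‖y‖ ^ 2 = ∑ i : Fin 3, (y i) ^ 2 := by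
  rw [EuclideanSpace.norm_eq, Real.sq_sqrt (by positivity)]
  simp [Real.norm_eq_abs, sq_abs]

lemma sum_abs_mul_le (w : Fin 3 → ℝ) :
    (∑ i : Fin 3, ∑ j : Fin 3, |w j| * |w i|) ≤ 3 * ∑ i : Fin 3, (w i) ^ 2 := by
  have h1 : (∑ i : Fin 3, ∑ j : Fin 3, |w j| * |w i|)
      = (∑ i : Fin 3, |w i|) * (∑ j : Fin 3, |w j|) := by
    rw [Finset.sum_mul_sum]
    exact Finset.sum_congr rfl fun i _ => Finset.sum_congr rfl fun j _ => mul_comm _ _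
  rw [h1]
  have h2 := Finset.sum_mul_sq_le_sq_mul_sq Finset.univ (fun _ : Fin 3 => (1:ℝ))
    (fun i => |w i|)
  simp only [one_pow, one_mul, Finset.sum_const, Finset.card_univ, Fintype.card_fin,
    nsmul_eq_mul, sq_abs] at h2
  push_cast at h2
  calc (∑ i : Fin 3, |w i|) * (∑ j : Fin 3, |w j|) = (∑ i : Fin 3, |w i|) ^ 2 := (sq _).symm
    _ ≤ 3 * ∑ i : Fin 3, (w i) ^ 2 := by
        have := h2
        nlinarith [this]

lemma ball_ae_closedBall (ρ : ℝ) :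
    Metric.ball (0:E3) ρ =ᵐ[volume] Metric.closedBall (0:E3) ρ := by
  rw [MeasureTheory.ae_eq_set]
  constructor
  · rw [diff_eq_empty.2 Metric.ball_subset_closedBall]; simp
  · rw [Metric.closedBall_diff_ball]
    exact Measure.addHaar_sphere volume 0 ρ

lemma pointwise_bound (K r ρ : ℝ) (hK : 0 < K) (hr : 0 < r) (hrρ : r < ρ)
    (η : E3 → ℝ) (hη : ContDiff ℝ (⊤ : ℕ∞) η)
    (hsupp : Function.support η ⊆ Metric.ball (0:E3) ρ)
    (hone : ∀ x ∈ Metric.ball (0:E3) ((r+3*ρ)/4), η x = 1)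
    (hd1 : ∀ x, ‖fderiv ℝ η x‖ ≤ K / (ρ - r))
    (hd2 : ∀ x, ‖iteratedFDeriv ℝ 2 η x‖ ≤ K / (ρ - r)^2)
    (v : E3 → E3) (hv : MemLp (fun y => ‖v y‖) 2 (volume.restrict (Metric.ball (0:E3) ρ)))
    (x : E3) (hx : x ∈ Metric.ball (0:E3) ((r+ρ)/2)) :
    |∫ y : E3, ∑ i : Fin 3, ∑ j : Fin 3,
        (2 * dGam i (x - y) * pd j η y * (v y j * v y i)
          - Gam (x - y) * pd i (pd j η) y * (v y j * v y i))|
      ≤ 108*K / (ρ - r)^3 * ∫ y in Metric.ball (0:E3) ρ, ‖v y‖^2 := by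
  have hρr : 0 < ρ - r := by linarith
  have hρrne : ρ - r ≠ 0 := ne_of_gt hρr
  set b := (r + 3*ρ)/4 with hb
  set S := Metric.closedBall (0:E3) ρ \ Metric.ball (0:E3) b with hS
  set M := 108*K / (ρ - r)^3 with hM
  have hMpos : 0 < M := by positivity
  set f : E3 → ℝ := fun y => ∑ i : Fin 3, ∑ j : Fin 3,
        (2 * dGam i (x - y) * pd j η y * (v y j * v y i)
          - Gam (x - y) * pd i (pd j η) y * (v y j * v y i)) with hf
  -- derivatives of η vanish off S
  have hzero : ∀ y ∉ S, (∀ j, pd j η y = 0) ∧ (∀ i j, pd i (pd j η) y = 0) := by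
    intro y hy
    rw [hS, Set.mem_diff, not_and_or, not_not] at hy
    rcases hy with hy | hy
    · -- outside closedBall ρ : η = 0 there
      have hU : IsOpen (Metric.closedBall (0:E3) ρ)ᶜ := Metric.isClosed_closedBall.isOpen_compl
      have hηz : ∀ z ∈ (Metric.closedBall (0:E3) ρ)ᶜ, η z = 0 := by
        intro z hz
        by_contra hne
        exact hz (Metric.ball_subset_closedBall (hsupp hne))
      have h1 : ∀ j, ∀ z ∈ (Metric.closedBall (0:E3) ρ)ᶜ, pd j η z = 0 :=
        fun j z hz => pd_eq_zero_of_const_on hU hηz hz j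
      exact ⟨fun j => h1 j y hy,
        fun i j => pd_eq_zero_of_const_on hU (h1 j) hy i⟩
    · have hU : IsOpen (Metric.ball (0:E3) b) := Metric.isOpen_ball
      have h1 : ∀ j, ∀ z ∈ Metric.ball (0:E3) b, pd j η z = 0 :=
        fun j z hz => pd_eq_zero_of_const_on hU hone hz j
      exact ⟨fun j => h1 j y hy, fun i j => pd_eq_zero_of_const_on hU (h1 j) hy i⟩
  have hfzero : ∀ y ∉ S, f y = 0 := by
    intro y hy
    obtain ⟨h1, h2⟩ := hzero y hy
    simp [hf, h1, h2]
  -- pointwise bound on S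
  have hbound : ∀ y ∈ S, |f y| ≤ M * ‖v y‖ ^ 2 := by
    intro y hy
    have hyb : b ≤ ‖y‖ := by
      have := hy.2
      rw [Metric.mem_ball, dist_zero_right, not_lt] at this
      exact this
    have hxa : ‖x‖ < (r + ρ)/2 := by
      rw [Metric.mem_ball, dist_zero_right] at hx; exact hx
    have hdist : (ρ - r)/4 ≤ ‖x - y‖ := by
      have h1 : ‖y‖ - ‖x‖ ≤ ‖y - x‖ := norm_sub_norm_le y x
      rw [norm_sub_rev] at h1
      have : b - (r+ρ)/2 = (ρ - r)/4 := by rw [hb]; ring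
      linarith
    have hδ : (0:ℝ) < (ρ - r)/4 := by linarith
    have hG : |Gam (x - y)| ≤ 4 / (ρ - r) := by
      calc |Gam (x-y)| ≤ 1 / ((ρ-r)/4) := abs_Gam_le hδ hdist
        _ = 4 / (ρ - r) := by field_simp
    have hdG : ∀ i, |dGam i (x - y)| ≤ 16 / (ρ - r)^2 := by
      intro i
      calc |dGam i (x-y)| ≤ 1 / ((ρ-r)/4)^2 := abs_dGam_le i hδ hdist
        _ = 16 / (ρ - r)^2 := by field_simp; ring
    have hterm : ∀ i j : Fin 3,
        |2 * dGam i (x - y) * pd j η y * (v y j * v y i)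
          - Gam (x - y) * pd i (pd j η) y * (v y j * v y i)|
        ≤ 36 * K / (ρ - r)^3 * (|v y j| * |v y i|) := by
      intro i j
      have e1 : |2 * dGam i (x - y) * pd j η y * (v y j * v y i)|
          ≤ 32 * K / (ρ - r)^3 * (|v y j| * |v y i|) := by
        rw [abs_mul, abs_mul, abs_mul, abs_mul]
        have b1 := hdG i
        have b2 : |pd j η y| ≤ K / (ρ - r) := (abs_pd_le j η y).trans (hd1 y)
        calc |(2:ℝ)| * |dGam i (x-y)| * |pd j η y| * (|v y j| * |v y i|)
            ≤ 2 * (16/(ρ-r)^2) * (K/(ρ-r)) * (|v y j| * |v y i|) := by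
              gcongr <;> simp [abs_nonneg]
          _ = 32 * K / (ρ - r)^3 * (|v y j| * |v y i|) := by field_simp; ring
      have e2 : |Gam (x - y) * pd i (pd j η) y * (v y j * v y i)|
          ≤ 4 * K / (ρ - r)^3 * (|v y j| * |v y i|) := by
        rw [abs_mul, abs_mul, abs_mul]
        have b2 : |pd i (pd j η) y| ≤ K / (ρ - r)^2 := (abs_pd_pd_le hη i j y).trans (hd2 y)
        calc |Gam (x-y)| * |pd i (pd j η) y| * (|v y j| * |v y i|)
            ≤ (4/(ρ-r)) * (K/(ρ-r)^2) * (|v y j| * |v y i|) := by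
              gcongr <;> simp [abs_nonneg]
          _ = 4 * K / (ρ - r)^3 * (|v y j| * |v y i|) := by field_simp
      calc |2 * dGam i (x - y) * pd j η y * (v y j * v y i)
          - Gam (x - y) * pd i (pd j η) y * (v y j * v y i)|
          ≤ |2 * dGam i (x - y) * pd j η y * (v y j * v y i)|
            + |Gam (x - y) * pd i (pd j η) y * (v y j * v y i)| := abs_sub _ _
        _ ≤ 32 * K / (ρ - r)^3 * (|v y j| * |v y i|)
            + 4 * K / (ρ - r)^3 * (|v y j| * |v y i|) := add_le_add e1 e2
        _ = 36 * K / (ρ - r)^3 * (|v y j| * |v y i|) := by ring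
    calc |f y| ≤ ∑ i : Fin 3, ∑ j : Fin 3,
          |2 * dGam i (x - y) * pd j η y * (v y j * v y i)
            - Gam (x - y) * pd i (pd j η) y * (v y j * v y i)| := by
            refine (Finset.abs_sum_le_sum_abs _ _).trans ?_
            exact Finset.sum_le_sum fun i _ => Finset.abs_sum_le_sum_abs _ _
      _ ≤ ∑ i : Fin 3, ∑ j : Fin 3, 36 * K / (ρ - r)^3 * (|v y j| * |v y i|) := by
            exact Finset.sum_le_sum fun i _ => Finset.sum_le_sum fun j _ => hterm i j
      _ = 36 * K / (ρ - r)^3 * ∑ i : Fin 3, ∑ j : Fin 3, (|v y j| * |v y i|) := by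
            rw [Finset.mul_sum]; exact Finset.sum_congr rfl fun i _ => (Finset.mul_sum _ _ _).symm
      _ ≤ 36 * K / (ρ - r)^3 * (3 * ∑ i : Fin 3, (v y i) ^ 2) := by
            have := sum_abs_mul_le (fun i => v y i)
            gcongr
      _ = M * ‖v y‖ ^ 2 := by rw [normsq_eq, hM]; ring
  -- integration
  have hSmeas : MeasurableSet S := measurableSet_closedBall.diff measurableSet_ball
  have hae : Metric.ball (0:E3) ρ =ᵐ[volume] Metric.closedBall (0:E3) ρ := ball_ae_closedBall ρ
  have hint_ball : IntegrableOn (fun y => ‖v y‖^2) (Metric.ball (0:E3) ρ) volume := hv.integrable_sq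
  have hint_cb : IntegrableOn (fun y => ‖v y‖^2) (Metric.closedBall (0:E3) ρ) volume :=
    hint_ball.congr_set_ae hae.symm
  have hg_int : Integrable (S.indicator fun y => M * ‖v y‖^2) volume := by
    rw [integrable_indicator_iff hSmeas]
    exact (hint_cb.mono_set Set.diff_subset).const_mul M
  have h1 : |∫ y : E3, f y| ≤ ∫ y : E3, |f y| := by
    simpa [Real.norm_eq_abs] using norm_integral_le_integral_norm (μ := volume) f
  have h2 : ∫ y : E3, |f y| ≤ ∫ y : E3, S.indicator (fun y => M * ‖v y‖^2) y := by
    refine integral_mono_of_nonneg (ae_of_all _ fun y => abs_nonneg _) hg_int (ae_of_all _ ?_)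
    intro y
    by_cases hy : y ∈ S
    · rw [Set.indicator_of_mem hy]; exact hbound y hy
    · rw [Set.indicator_of_notMem hy]
      show |f y| ≤ 0
      rw [hfzero y hy]; simp
  have h3 : ∫ y : E3, S.indicator (fun y => M * ‖v y‖^2) y = ∫ y in S, M * ‖v y‖^2 :=
    integral_indicator hSmeas
  have h4 : ∫ y in S, M * ‖v y‖^2 ≤ ∫ y in Metric.closedBall (0:E3) ρ, M * ‖v y‖^2 :=
    setIntegral_mono_set (hint_cb.const_mul M) (ae_of_all _ fun y => by positivity)
      (HasSubset.Subset.eventuallyLE Set.diff_subset)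
  have h5 : ∫ y in Metric.closedBall (0:E3) ρ, M * ‖v y‖^2
      = ∫ y in Metric.ball (0:E3) ρ, M * ‖v y‖^2 := setIntegral_congr_set hae.symm
  have h6 : ∫ y in Metric.ball (0:E3) ρ, M * ‖v y‖^2
      = M * ∫ y in Metric.ball (0:E3) ρ, ‖v y‖^2 := MeasureTheory.integral_const_mul M _
  have : |∫ y : E3, f y| ≤ M * ∫ y in Metric.ball (0:E3) ρ, ‖v y‖^2 := by
    rw [← h6, ← h5]; linarith
  simpa [hM] using this


/-!
STATEMENT 5: estimates for the harmonic part `Π₂` of the pressure decomposition.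
-/
theorem Pi2_estimate (K : ℝ) (hK : 0 < K) :
    ∃ C : ℝ, 0 < C ∧
      ∀ (r ρ : ℝ), 0 < r → r < ρ →
      ∀ η : E3 → ℝ, ContDiff ℝ (⊤ : ℕ∞) η →
        (∀ x, 0 ≤ η x) → (∀ x, η x ≤ 1) →
        Function.support η ⊆ Metric.ball (0 : E3) ρ →
        (∀ x ∈ Metric.ball (0 : E3) ((r + 3*ρ)/4), η x = 1) →
        (∀ x, ‖fderiv ℝ η x‖ ≤ K / (ρ - r)) →
        (∀ x, ‖iteratedFDeriv ℝ 2 η x‖ ≤ K / (ρ - r) ^ 2) →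
      ∀ u : ℝ → E3 → E3,
        (∀ᵐ t ∂(volume.restrict (TI ρ)),
          MemLp (fun y => ‖u t y‖) 2 (volume.restrict (Metric.ball (0 : E3) ρ))) →
      ∀ P₂ : ℝ → E3 → ℝ,
        (∀ t x, P₂ t x = ∫ y : E3, ∑ i : Fin 3, ∑ j : Fin 3,
            (2 * dGam i (x - y) * pd j η y * (u t y j * u t y i)
              - Gam (x - y) * pd i (pd j η) y * (u t y j * u t y i))) →
        (∀ᵐ t ∂(volume.restrict (TI ρ)), ∀ x ∈ Metric.ball (0 : E3) ((r + ρ)/2),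
            |P₂ t x| ≤ C / (ρ - r) ^ 3 * ∫ y in Metric.ball (0 : E3) ρ, ‖u t y‖ ^ 2)
        ∧ mixedNorm (3/2) (3/2) ((r + ρ)/2) ρ P₂
            ≤ ENNReal.ofReal (C * ρ ^ 3 / (ρ - r) ^ 3) *
                (mixedNorm 3 3 ρ ρ (fun t x => ‖u t x‖)) ^ (2 : ℝ) := by

  classical
  set V1 : ℝ := (volume (Metric.ball (0:E3) 1)).toReal with hV1
  have hV1nonneg : 0 ≤ V1 := ENNReal.toReal_nonneg
  refine ⟨108*K*(V1+1), by positivity, ?_⟩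
  intro r ρ hr hrρ η hη hη0 hη1 hsupp hone hd1 hd2 u hu P₂ hP
  have hρr : 0 < ρ - r := by linarith
  have hρ : 0 < ρ := hr.trans hrρ
  set a := (r+ρ)/2 with ha
  have haρ : a ≤ ρ := by rw [ha]; linarith
  set C₀ : ℝ := 108*K with hC0
  have hC0pos : 0 < C₀ := by positivity
  have hC0' : 0 ≤ C₀ / (ρ - r)^3 := by positivity
  set I : ℝ → ℝ := fun t => ∫ y in Metric.ball (0:E3) ρ, ‖u t y‖^2 with hI
  have key : ∀ᵐ t ∂(volume.restrict (TI ρ)), ∀ x ∈ Metric.ball (0:E3) a,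
      |P₂ t x| ≤ C₀ / (ρ-r)^3 * I t := by
    filter_upwards [hu] with t ht
    intro x hx
    rw [hP t x]
    exact pointwise_bound K r ρ hK hr hrρ η hη hsupp hone hd1 hd2 (u t) ht x hx
  have hInonneg : ∀ t, 0 ≤ I t := fun t => integral_nonneg fun y => by positivity
  constructor
  · filter_upwards [key] with t ht x hx
    refine (ht x hx).trans ?_
    have h1 : C₀ ≤ 108*K*(V1+1) := by nlinarith
    gcongr
  · -- mixed norm part
    set μa := volume.restrict (Metric.ball (0:E3) a) with hμa
    set μρ := volume.restrict (Metric.ball (0:E3) ρ) with hμρ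
    set Va := volume (Metric.ball (0:E3) a) with hVa
    set Vρ := volume (Metric.ball (0:E3) ρ) with hVρ
    have hVafin : Va ≠ ∞ := measure_ball_lt_top.ne
    have hVρfin : Vρ ≠ ∞ := measure_ball_lt_top.ne
    have hVρpos : Vρ ≠ 0 := (Metric.measure_ball_pos volume 0 hρ).ne'
    have hVaVρ : Va ≤ Vρ := measure_mono (Metric.ball_subset_ball haρ)
    set N3 : ℝ → ℝ≥0∞ := fun t => eLpNorm (fun x => ‖u t x‖) 3 μρ with hN3
    have hp32ne : (3/2 : ℝ≥0∞) ≠ ∞ := by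
      exact (ENNReal.div_lt_top (by norm_num) (by norm_num)).ne
    have t32 : ((3/2 : ℝ≥0∞)).toReal = 3/2 := by
      rw [ENNReal.toReal_div]; norm_num
    have t3 : ((3 : ℝ≥0∞)).toReal = 3 := by norm_num
    set A : ℝ≥0∞ := Va ^ (2/3 : ℝ) * Vρ ^ (1/3 : ℝ) * ENNReal.ofReal (C₀/(ρ-r)^3) with hA
    have hAfin : A ≠ ∞ := by
      rw [hA]
      exact ENNReal.mul_ne_top (ENNReal.mul_ne_top
        (ENNReal.rpow_ne_top_of_nonneg (by norm_num) hVafin)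
        (ENNReal.rpow_ne_top_of_nonneg (by norm_num) hVρfin)) ENNReal.ofReal_ne_top
    -- per-time estimate of the L^{3/2} norm of P₂ t
    have hstep : ∀ᵐ t ∂(volume.restrict (TI ρ)),
        eLpNorm (P₂ t) (3/2) μa ≤ A * (N3 t) ^ (2:ℝ) := by
      filter_upwards [key, hu] with t ht htu
      have hb1 : ∀ᵐ x ∂μa, ‖P₂ t x‖ ≤ C₀/(ρ-r)^3 * I t := by
        refine (ae_restrict_mem measurableSet_ball).mono fun x hx => ?_
        simpa [Real.norm_eq_abs] using ht x hx
      have hb2 := eLpNorm_le_of_ae_bound (p := (3/2 : ℝ≥0∞)) hb1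
      rw [Measure.restrict_apply_univ] at hb2
      have he : ((3/2 : ℝ≥0∞)).toReal⁻¹ = (2/3 : ℝ) := by rw [t32]; norm_num
      rw [he] at hb2
      -- identify ofReal (C₀' * I t) with eLpNorm squared
      have hN2 : ENNReal.ofReal (I t) = (eLpNorm (fun y => ‖u t y‖) 2 μρ) ^ (2:ℝ) := by
        rw [hI]
        rw [ofReal_integral_eq_lintegral_ofReal htu.integrable_sq
          (ae_of_all _ fun y => by positivity)]
        rw [eLpNorm_eq_lintegral_rpow_enorm_toReal two_ne_zero ENNReal.ofNat_ne_top]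
        rw [← ENNReal.rpow_mul]
        norm_num
      have hH : eLpNorm (fun y => ‖u t y‖) 2 μρ ≤ N3 t * Vρ ^ (1/6 : ℝ) := by
        have h := eLpNorm_le_eLpNorm_mul_rpow_measure_univ (p := (2:ℝ≥0∞)) (q := (3:ℝ≥0∞))
          (by norm_num) htu.1
        rw [Measure.restrict_apply_univ] at h
        have : (1/(2:ℝ≥0∞).toReal - 1/(3:ℝ≥0∞).toReal) = (1/6 : ℝ) := by norm_num
        rwa [this] at h
      have hsq : (eLpNorm (fun y => ‖u t y‖) 2 μρ) ^ (2:ℝ)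
          ≤ (N3 t) ^ (2:ℝ) * Vρ ^ (1/3 : ℝ) := by
        calc (eLpNorm (fun y => ‖u t y‖) 2 μρ) ^ (2:ℝ)
            ≤ (N3 t * Vρ ^ (1/6 : ℝ)) ^ (2:ℝ) := ENNReal.rpow_le_rpow hH (by norm_num)
          _ = (N3 t) ^ (2:ℝ) * Vρ ^ (1/3 : ℝ) := by
              rw [ENNReal.mul_rpow_of_nonneg _ _ (by norm_num : (0:ℝ) ≤ 2),
                ← ENNReal.rpow_mul]
              norm_num
      calc eLpNorm (P₂ t) (3/2) μa
          ≤ Va ^ (2/3 : ℝ) * ENNReal.ofReal (C₀/(ρ-r)^3 * I t) := hb2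
        _ = Va ^ (2/3 : ℝ) * (ENNReal.ofReal (C₀/(ρ-r)^3) * ENNReal.ofReal (I t)) := by
              rw [ENNReal.ofReal_mul hC0']
        _ ≤ Va ^ (2/3 : ℝ) * (ENNReal.ofReal (C₀/(ρ-r)^3) * ((N3 t) ^ (2:ℝ) * Vρ ^ (1/3 : ℝ))) := by
              rw [hN2]
              exact mul_le_mul_right (mul_le_mul_right hsq _) _
        _ = A * (N3 t) ^ (2:ℝ) := by rw [hA]; ring
    -- now integrate in time
    have hq : (3/2 : ℝ≥0∞) ≠ ∞ := hp32ne
    have h3ne : (3 : ℝ≥0∞) ≠ ∞ := by norm_num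
    have hmB : mixedNorm 3 3 ρ ρ (fun t x => ‖u t x‖)
        = (∫⁻ t in TI ρ, (N3 t) ^ (3:ℝ)) ^ (1/3 : ℝ) := by
      rw [mixedNorm, if_neg h3ne, t3]
    have hmain : mixedNorm (3/2) (3/2) a ρ P₂
        ≤ A * (∫⁻ t in TI ρ, (N3 t) ^ (3:ℝ)) ^ (2/3 : ℝ) := by
      rw [mixedNorm, if_neg hq, t32]
      have step1 : (∫⁻ t in TI ρ, (eLpNorm (P₂ t) (3/2) μa) ^ (3/2 : ℝ))
          ≤ ∫⁻ t in TI ρ, (A ^ (3/2:ℝ)) * (N3 t) ^ (3:ℝ) := by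
        refine lintegral_mono_ae (hstep.mono fun t ht => ?_)
        calc (eLpNorm (P₂ t) (3/2) μa) ^ (3/2 : ℝ)
            ≤ (A * (N3 t) ^ (2:ℝ)) ^ (3/2 : ℝ) := ENNReal.rpow_le_rpow ht (by norm_num)
          _ = (A ^ (3/2:ℝ)) * (N3 t) ^ (3:ℝ) := by
              rw [ENNReal.mul_rpow_of_nonneg _ _ (by norm_num : (0:ℝ) ≤ 3/2),
                ← ENNReal.rpow_mul]
              norm_num
      have step2 : (∫⁻ t in TI ρ, (A ^ (3/2:ℝ)) * (N3 t) ^ (3:ℝ))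
          = (A ^ (3/2:ℝ)) * ∫⁻ t in TI ρ, (N3 t) ^ (3:ℝ) :=
        lintegral_const_mul' _ _ (ENNReal.rpow_ne_top_of_nonneg (by norm_num) hAfin)
      calc (∫⁻ t in TI ρ, (eLpNorm (P₂ t) (3/2) μa) ^ (3/2 : ℝ)) ^ (1/(3/2) : ℝ)
          ≤ ((A ^ (3/2:ℝ)) * ∫⁻ t in TI ρ, (N3 t) ^ (3:ℝ)) ^ (1/(3/2) : ℝ) := by
            rw [← step2]
            exact ENNReal.rpow_le_rpow step1 (by norm_num)
        _ = A * (∫⁻ t in TI ρ, (N3 t) ^ (3:ℝ)) ^ (2/3 : ℝ) := by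
            rw [ENNReal.mul_rpow_of_nonneg _ _ (by norm_num : (0:ℝ) ≤ 1/(3/2)),
              ← ENNReal.rpow_mul]
            norm_num
    -- bound A
    have hVρ_val : Vρ = ENNReal.ofReal (ρ^3) * volume (Metric.ball (0:E3) 1) := by
      rw [hVρ, Measure.addHaar_ball volume 0 hρ.le, finrank_euclideanSpace_fin]
    have hA_le : A ≤ ENNReal.ofReal (108*K*(V1+1) * ρ^3 / (ρ-r)^3) := by
      have h1 : Va ^ (2/3 : ℝ) * Vρ ^ (1/3 : ℝ) ≤ Vρ := by
        calc Va ^ (2/3 : ℝ) * Vρ ^ (1/3 : ℝ)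
            ≤ Vρ ^ (2/3 : ℝ) * Vρ ^ (1/3 : ℝ) :=
              mul_le_mul_left (ENNReal.rpow_le_rpow hVaVρ (by norm_num)) _
          _ = Vρ ^ ((2/3 : ℝ) + (1/3 : ℝ)) := (ENNReal.rpow_add _ _ hVρpos hVρfin).symm
          _ = Vρ := by norm_num
      calc A ≤ Vρ * ENNReal.ofReal (C₀/(ρ-r)^3) := by
            rw [hA]; exact mul_le_mul_left h1 _
        _ = ENNReal.ofReal (ρ^3) * ENNReal.ofReal V1 * ENNReal.ofReal (C₀/(ρ-r)^3) := by
            rw [hVρ_val, hV1, ENNReal.ofReal_toReal measure_ball_lt_top.ne]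
        _ = ENNReal.ofReal (ρ^3 * V1 * (C₀/(ρ-r)^3)) := by
            rw [ENNReal.ofReal_mul (by positivity), ENNReal.ofReal_mul (by positivity)]
        _ ≤ ENNReal.ofReal (108*K*(V1+1) * ρ^3 / (ρ-r)^3) := by
            apply ENNReal.ofReal_le_ofReal
            rw [hC0]
            calc ρ^3 * V1 * (108*K/(ρ-r)^3)
                ≤ ρ^3 * (V1+1) * (108*K/(ρ-r)^3) := by gcongr; linarith
              _ = 108*K*(V1+1)*ρ^3/(ρ-r)^3 := by ring
    -- conclude
    refine hmain.trans ?_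
    have hrw : (mixedNorm 3 3 ρ ρ (fun t x => ‖u t x‖)) ^ (2:ℝ)
        = (∫⁻ t in TI ρ, (N3 t) ^ (3:ℝ)) ^ (2/3 : ℝ) := by
      rw [hmB, ← ENNReal.rpow_mul]
      norm_num
    rw [hrw]
    exact mul_le_mul_left hA_le _


end
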